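/- (Hopf bifurcation condition.) Let γ* = 5/6 + √721/42 and let (X₀, Y₀) be the equilibrium point of the planar tilt system, X₀ = −√6(3γ−4)/(2(3−γ)), Y₀ = 5(3γ−4)(3−2γ)/(2(3−γ)²). At γ = γ*, the Jacobian matrix of the planar vector field at (X₀, Y₀) has trace 0 and determinant (45√721 − 1205)/36, which is positive; hence its eigenvalues are the purely imaginary pair ±(i/6)√(45√721 − 1205). -/

import Mathlib

noncomputable section

namespace CFTilt

/-- the function `T(X,Y)` on the Collinson-French background. -/
def Tpl (γ X Y : ℝ) : ℝ :=
  (((3*γ - 4) - (Real.sqrt 6/3)*(γ-1)*X) * (1 - X^2 - Y) + (2/3)*(2-γ)*X^2)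
    / (1 - (γ-1)*(X^2 + Y))

/-- right-hand side of `X' = (T - 2/3)X - (2√6/3)Y`. -/
def FX (γ X Y : ℝ) : ℝ := (Tpl γ X Y - 2/3)*X - (2*Real.sqrt 6/3)*Y

/-- right-hand side of `Y' = 2(T + (2√6/3)X)Y`. -/
def FY (γ X Y : ℝ) : ℝ := 2*(Tpl γ X Y + (2*Real.sqrt 6/3)*X)*Y


/-!
In the coordinate `u = X / √6` the tilt system has rational coefficients: `X' = √6 · GX` and
`Y' = GY`. Its equilibrium lies on `Y = -u (6u + 1)`, where `V² = -u` and `T = -4u`; evaluating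
the partial derivatives of `T` there gives the Jacobian at the equilibrium in closed form, with
trace `-5 (21γ² - 35γ + 6) / (3 (3γ + 1)(γ - 3))` and determinant
`100 (2γ - 3)(3γ - 4) / (3 (3γ + 1)(γ - 3))`. The value `γ*` is the root of `21γ² - 35γ + 6` in
`(1, 2)`, where the determinant equals `(45√721 - 1205)/36 > 0`, and a real `2 × 2` matrix with
zero trace and positive determinant `d` has the eigenvalues `±i√d`.
-/

def tNum (γ u Y : ℝ) : ℝ := ((3*γ - 4) - 2*(γ-1)*u) * (1 - 6*u^2 - Y) + 4*(2-γ)*u^2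

def tDen (γ u Y : ℝ) : ℝ := 1 - (γ-1)*(6*u^2 + Y)

def Tu (γ u Y : ℝ) : ℝ := tNum γ u Y / tDen γ u Y

def GX (γ u Y : ℝ) : ℝ := (Tu γ u Y - 2/3)*u - 2/3*Y

def GY (γ u Y : ℝ) : ℝ := 2*(Tu γ u Y + 4*u)*Y

theorem Tpl_eq_Tu (γ X Y : ℝ) : Tpl γ X Y = Tu γ (X / √6) Y := by
  have h6 : √6 ^ 2 = 6 := Real.sq_sqrt (by norm_num)
  obtain ⟨u, rfl⟩ : ∃ u, X = √6 * u := ⟨X / √6, by field_simp⟩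
  have hsq : (√6 * u) ^ 2 = 6 * u ^ 2 := by rw [mul_pow, h6]
  have hlin : √6 / 3 * (γ - 1) * (√6 * u) = 2 * (γ - 1) * u := by
    linear_combination (γ - 1) * u / 3 * h6
  rw [mul_div_cancel_left₀ u (by positivity)]
  simp only [Tpl, Tu, tNum, tDen, hsq, hlin]
  ring

theorem FX_eq (γ X Y : ℝ) : FX γ X Y = √6 * GX γ (X / √6) Y := by
  rw [FX, GX, ← Tpl_eq_Tu]
  field_simp

theorem FY_eq (γ X Y : ℝ) : FY γ X Y = GY γ (X / √6) Y := by
  have h6 : √6 ^ 2 = 6 := Real.sq_sqrt (by norm_num)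
  rw [FY, GY, ← Tpl_eq_Tu]
  field_simp
  linear_combination 2 * X * Y * h6

theorem deriv_FX_X (γ X Y : ℝ) :
    deriv (fun x => FX γ x Y) X = deriv (fun u => GX γ u Y) (X / √6) := by
  have : √6 ≠ 0 := by positivity
  simp only [FX_eq, div_eq_inv_mul]
  rw [deriv_const_mul_field']
  dsimp only
  rw [deriv_comp_mul_left (f := fun u => GX γ u Y), smul_eq_mul, mul_inv_cancel_left₀ this]

theorem deriv_FX_Y (γ X Y : ℝ) :
    deriv (fun y => FX γ X y) Y = √6 * deriv (fun y => GX γ (X / √6) y) Y := by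
  simp only [FX_eq, deriv_const_mul_field']

theorem deriv_FY_X (γ X Y : ℝ) :
    deriv (fun x => FY γ x Y) X = (√6)⁻¹ * deriv (fun u => GY γ u Y) (X / √6) := by
  simp only [FY_eq, div_eq_inv_mul]
  rw [deriv_comp_mul_left (f := fun u => GY γ u Y), smul_eq_mul]

theorem deriv_FY_Y (γ X Y : ℝ) :
    deriv (fun y => FY γ X y) Y = deriv (fun y => GY γ (X / √6) y) Y := by
  simp only [FY_eq]

section Partials

def dTu_du (γ u Y : ℝ) : ℝ :=
  (-2*(γ-1)*(1 - 6*u^2 - Y) - 12*u*((3*γ - 4) - 2*(γ-1)*u) + 8*(2-γ)*u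
    + 12*(γ-1)*u*Tu γ u Y) / tDen γ u Y

def dTu_dY (γ u Y : ℝ) : ℝ := (-((3*γ - 4) - 2*(γ-1)*u) + (γ-1)*Tu γ u Y) / tDen γ u Y

variable {γ u Y : ℝ}

theorem hasDerivAt_Tu_u (hD : tDen γ u Y ≠ 0) :
    HasDerivAt (fun u => Tu γ u Y) (dTu_du γ u Y) u := by
  have hN : HasDerivAt (fun u => tNum γ u Y)
      (-2*(γ-1)*(1 - 6*u^2 - Y) - 12*u*((3*γ - 4) - 2*(γ-1)*u) + 8*(2-γ)*u) u :=
    (((((hasDerivAt_id u).const_mul (2*(γ-1))).const_sub (3*γ - 4)).mul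
      ((((hasDerivAt_pow 2 u).const_mul 6).const_sub 1).sub_const Y)).add
      ((hasDerivAt_pow 2 u).const_mul (4*(2-γ)))).congr_deriv
      (by simp only [mul_one, neg_mul, id_eq, Nat.cast_ofNat, Nat.add_one_sub_one, pow_one, mul_neg]
          ring)
  have hD' : HasDerivAt (fun u => tDen γ u Y) (-12*(γ-1)*u) u :=
    (((((hasDerivAt_pow 2 u).const_mul 6).add_const Y).const_mul (γ-1)).const_sub 1).congr_deriv
      (by simp only [Nat.cast_ofNat, Nat.add_one_sub_one, pow_one, neg_mul, neg_inj]; ring)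
  refine (hN.div hD' hD).congr_deriv ?_
  simp only [dTu_du, Tu]
  field_simp
  ring

theorem hasDerivAt_Tu_Y (hD : tDen γ u Y ≠ 0) :
    HasDerivAt (fun Y => Tu γ u Y) (dTu_dY γ u Y) Y := by
  have hN : HasDerivAt (fun Y => tNum γ u Y) (-((3*γ - 4) - 2*(γ-1)*u)) Y :=
    ((((hasDerivAt_id Y).const_sub (1 - 6*u^2)).const_mul ((3*γ - 4) - 2*(γ-1)*u)).add_const
      (4*(2-γ)*u^2)).congr_deriv (by simp)
  have hD' : HasDerivAt (fun Y => tDen γ u Y) (-(γ-1)) Y :=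
    ((((hasDerivAt_id Y).const_add (6*u^2)).const_mul (γ-1)).const_sub 1).congr_deriv (by simp)
  refine (hN.div hD' hD).congr_deriv ?_
  simp only [dTu_dY, Tu]
  field_simp
  ring

theorem hasDerivAt_GX_u (hD : tDen γ u Y ≠ 0) :
    HasDerivAt (fun u => GX γ u Y) (dTu_du γ u Y * u + Tu γ u Y - 2/3) u :=
  ((((hasDerivAt_Tu_u hD).sub_const (2/3)).mul (hasDerivAt_id u)).sub_const (2/3*Y)).congr_deriv
    (by simp only [id_eq, mul_one]; ring)

theorem hasDerivAt_GX_Y (hD : tDen γ u Y ≠ 0) :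
    HasDerivAt (fun Y => GX γ u Y) (dTu_dY γ u Y * u - 2/3) Y :=
  ((((hasDerivAt_Tu_Y hD).sub_const (2/3)).mul_const u).sub
    ((hasDerivAt_id Y).const_mul (2/3))).congr_deriv (by simp)

theorem hasDerivAt_GY_u (hD : tDen γ u Y ≠ 0) :
    HasDerivAt (fun u => GY γ u Y) (2*(dTu_du γ u Y + 4)*Y) u :=
  ((((hasDerivAt_Tu_u hD).add ((hasDerivAt_id u).const_mul 4)).const_mul 2).mul_const Y).congr_deriv
    (by simp)

theorem hasDerivAt_GY_Y (hD : tDen γ u Y ≠ 0) :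
    HasDerivAt (fun Y => GY γ u Y) (2*(dTu_dY γ u Y * Y + Tu γ u Y + 4*u)) Y :=
  ((((hasDerivAt_Tu_Y hD).add_const (4*u)).const_mul 2).mul (hasDerivAt_id Y)).congr_deriv
    (by simp only [id_eq, mul_one]; ring)

end Partials

section Equilibrium

def equilibriumX (γ : ℝ) : ℝ := -√6*(3*γ - 4)/(2*(3 - γ))

def equilibriumU (γ : ℝ) : ℝ := -(3*γ - 4)/(2*(3 - γ))

def equilibriumY (γ : ℝ) : ℝ := 5*(3*γ - 4)*(3 - 2*γ)/(2*(3 - γ)^2)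

theorem equilibriumX_div_sqrt_six (γ : ℝ) : equilibriumX γ / √6 = equilibriumU γ := by
  rw [equilibriumX, equilibriumU]
  field_simp

variable {γ : ℝ}

theorem tDen_equilibrium (h3 : γ ≠ 3) :
    tDen γ (equilibriumU γ) (equilibriumY γ) = (3*γ + 1)*(γ - 2)/(2*(γ - 3)) := by
  simp only [tDen, equilibriumU, equilibriumY]
  field_simp
  ring

theorem tDen_equilibrium_ne_zero (h3 : γ ≠ 3) (h2 : γ ≠ 2) (h1 : 3*γ + 1 ≠ 0) :
    tDen γ (equilibriumU γ) (equilibriumY γ) ≠ 0 := by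
  rw [tDen_equilibrium h3]
  positivity

theorem Tu_equilibrium (h3 : γ ≠ 3) (h2 : γ ≠ 2) (h1 : 3*γ + 1 ≠ 0) :
    Tu γ (equilibriumU γ) (equilibriumY γ) = -4 * equilibriumU γ := by
  rw [Tu, div_eq_iff (tDen_equilibrium_ne_zero h3 h2 h1), tDen_equilibrium h3]
  simp only [tNum, equilibriumU, equilibriumY]
  field_simp
  ring

theorem dTu_du_equilibrium (h3 : γ ≠ 3) (h2 : γ ≠ 2) (h1 : 3*γ + 1 ≠ 0) :
    dTu_du γ (equilibriumU γ) (equilibriumY γ) = -10*(25*γ^2 - 72*γ + 51)/((γ - 3)*(3*γ + 1)) := by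
  rw [dTu_du, Tu_equilibrium h3 h2 h1, tDen_equilibrium h3]
  simp only [equilibriumU, equilibriumY]
  field_simp
  ring

theorem dTu_dY_equilibrium (h3 : γ ≠ 3) (h2 : γ ≠ 2) (h1 : 3*γ + 1 ≠ 0) :
    dTu_dY γ (equilibriumU γ) (equilibriumY γ) = -4*(3*γ - 4)/(3*γ + 1) := by
  rw [dTu_dY, Tu_equilibrium h3 h2 h1, tDen_equilibrium h3]
  simp only [equilibriumU]
  field_simp
  ring

theorem trace_jacobian_equilibrium (h3 : γ ≠ 3) (h2 : γ ≠ 2) (h1 : 3*γ + 1 ≠ 0) :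
    deriv (fun x => FX γ x (equilibriumY γ)) (equilibriumX γ)
      + deriv (fun y => FY γ (equilibriumX γ) y) (equilibriumY γ)
      = -5*(21*γ^2 - 35*γ + 6)/(3*(3*γ + 1)*(γ - 3)) := by
  have hD := tDen_equilibrium_ne_zero h3 h2 h1
  -- the form in which `field_simp` meets the factor `3*γ + 1`
  have : γ * 3 + 1 ≠ 0 := by rwa [mul_comm] at h1
  rw [deriv_FX_X, deriv_FY_Y, equilibriumX_div_sqrt_six, (hasDerivAt_GX_u hD).deriv,
    (hasDerivAt_GY_Y hD).deriv, Tu_equilibrium h3 h2 h1,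
    dTu_du_equilibrium h3 h2 h1, dTu_dY_equilibrium h3 h2 h1]
  simp only [equilibriumU, equilibriumY]
  field_simp
  ring

theorem det_jacobian_equilibrium (h3 : γ ≠ 3) (h2 : γ ≠ 2) (h1 : 3*γ + 1 ≠ 0) :
    deriv (fun x => FX γ x (equilibriumY γ)) (equilibriumX γ)
        * deriv (fun y => FY γ (equilibriumX γ) y) (equilibriumY γ)
      - deriv (fun y => FX γ (equilibriumX γ) y) (equilibriumY γ)
        * deriv (fun x => FY γ x (equilibriumY γ)) (equilibriumX γ)
      = 100*(2*γ - 3)*(3*γ - 4)/(3*(3*γ + 1)*(γ - 3)) := by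
  have hD := tDen_equilibrium_ne_zero h3 h2 h1
  have : γ * 3 + 1 ≠ 0 := by rwa [mul_comm] at h1
  have : √6 ≠ 0 := by positivity
  rw [deriv_FX_X, deriv_FY_Y, deriv_FX_Y, deriv_FY_X, equilibriumX_div_sqrt_six,
    mul_mul_mul_comm, mul_inv_cancel₀ this, one_mul]
  rw [(hasDerivAt_GX_u hD).deriv, (hasDerivAt_GY_Y hD).deriv, (hasDerivAt_GX_Y hD).deriv,
    (hasDerivAt_GY_u hD).deriv, Tu_equilibrium h3 h2 h1, dTu_du_equilibrium h3 h2 h1,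
    dTu_dY_equilibrium h3 h2 h1]
  simp only [equilibriumU, equilibriumY]
  field_simp
  ring

end Equilibrium

theorem exists_mulVec_eq_smul_of_sq_eq_neg_det {a b c d : ℝ} (htr : a + d = 0)
    (hdet : 0 < a*d - b*c) {μ : ℂ} (hμ : μ^2 = -((a*d - b*c : ℝ) : ℂ)) :
    ∃ v : Fin 2 → ℂ, v ≠ 0 ∧ (!![(a : ℂ), (b : ℂ); (c : ℂ), (d : ℂ)]).mulVec v = μ • v := by
  have hb : (b : ℂ) ≠ 0 := by
    rintro hb
    have hb : b = 0 := by exact_mod_cast hb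
    rw [hb, show d = -a by linarith] at hdet
    nlinarith [sq_nonneg a]
  have htrC : (a : ℂ) + d = 0 := by exact_mod_cast htr
  push_cast at hμ
  refine ⟨![(b : ℂ), μ - a], fun hv => hb (by simpa using congrFun hv 0), ?_⟩
  ext i
  fin_cases i <;>
    simp only [Matrix.mulVec, dotProduct, Fin.sum_univ_two, Matrix.of_apply, Matrix.cons_val',
      Matrix.cons_val_fin_one, Matrix.cons_val_zero, Matrix.cons_val_one, Pi.smul_apply,
      smul_eq_mul, Fin.zero_eta, Fin.mk_one, Fin.isValue]
  · ring
  · linear_combination -hμ + μ * htrC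

theorem hopf_bifurcation_condition :
    let γs : ℝ := 5/6 + Real.sqrt 721/42
    let X0 : ℝ := -Real.sqrt 6*(3*γs-4)/(2*(3-γs))
    let Y0 : ℝ := 5*(3*γs-4)*(3-2*γs)/(2*(3-γs)^2)
    let J11 : ℝ := deriv (fun x => FX γs x Y0) X0
    let J12 : ℝ := deriv (fun y => FX γs X0 y) Y0
    let J21 : ℝ := deriv (fun x => FY γs x Y0) X0
    let J22 : ℝ := deriv (fun y => FY γs X0 y) Y0
    let μ : ℂ := (Complex.I/6) * ((Real.sqrt (45*Real.sqrt 721 - 1205) : ℝ) : ℂ)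
    J11 + J22 = 0 ∧
    J11*J22 - J12*J21 = (45*Real.sqrt 721 - 1205)/36 ∧
    0 < (45*Real.sqrt 721 - 1205)/36 ∧
    (∃ v : Fin 2 → ℂ, v ≠ 0 ∧
      (!![(J11 : ℂ), (J12 : ℂ); (J21 : ℂ), (J22 : ℂ)]).mulVec v = μ • v) ∧
    (∃ v : Fin 2 → ℂ, v ≠ 0 ∧
      (!![(J11 : ℂ), (J12 : ℂ); (J21 : ℂ), (J22 : ℂ)]).mulVec v = (-μ) • v) := by
  intro γs X0 Y0 J11 J12 J21 J22 μ
  have hr : √721 ^ 2 = 721 := Real.sq_sqrt (by norm_num)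
  have hr_lo : 26.8 < √721 := by nlinarith [Real.sqrt_nonneg 721]
  have hr_hi : √721 < 27 := by nlinarith [Real.sqrt_nonneg 721]
  have h3 : γs ≠ 3 := by norm_num [γs]; linarith
  have h2 : γs ≠ 2 := by norm_num [γs]; linarith
  have h1 : 3*γs + 1 ≠ 0 := by norm_num [γs]; linarith
  have hquad : 21*γs^2 - 35*γs + 6 = 0 := by
    simp only [γs]
    linear_combination hr / 84
  have htr : J11 + J22 = 0 :=
    (trace_jacobian_equilibrium h3 h2 h1).trans (by rw [hquad, mul_zero, zero_div])
  have hdet : J11*J22 - J12*J21 = (45*√721 - 1205)/36 := by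
    refine (det_jacobian_equilibrium h3 h2 h1).trans ?_
    rw [div_eq_div_iff (by simp [h1, sub_ne_zero.2 h3]) (by norm_num)]
    simp only [γs]
    linear_combination (785/28 - 45/196*√721) * hr
  have hpos : 0 < (45*√721 - 1205)/36 := by linarith
  have hμ : μ^2 = -((J11*J22 - J12*J21 : ℝ) : ℂ) := by
    have hs : √(45*√721 - 1205) ^ 2 = 45*√721 - 1205 := Real.sq_sqrt (by linarith)
    rw [hdet]
    simp only [μ, mul_pow, div_pow, Complex.I_sq, ← Complex.ofReal_pow, hs]
    push_cast
    ring
  exact ⟨htr, hdet, hpos, exists_mulVec_eq_smul_of_sq_eq_neg_det htr (hdet ▸ hpos) hμ,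
    exists_mulVec_eq_smul_of_sq_eq_neg_det htr (hdet ▸ hpos) (by rw [neg_sq, hμ])⟩

end CFTilt
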